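/- arXiv:1508.03948 — 5 statements merged into one kernel-verified Lean document; each statement's English description precedes it below -/
import Mathlib

section
/- For every real r > 0 there is exactly one complex number t with 0 < Im t < π satisfying t e^t = i r; moreover this solution satisfies Re t > 0 and 0 < Im t < π/2. -/
open Complex Real

noncomputable def fS (y : ℝ) : ℝ := (y / Real.cos y) * Real.exp (y * Real.tan y)

lemma fS_strictMono : StrictMonoOn fS (Set.Ico 0 (π/2)) := by
  intro a ha b hb hab
  obtain ⟨ha0, haπ⟩ := ha
  obtain ⟨hb0, hbπ⟩ := hb
  have hca : 0 < Real.cos a := Real.cos_pos_of_mem_Ioo ⟨by linarith [Real.pi_pos], haπ⟩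
  have hcb : 0 < Real.cos b := Real.cos_pos_of_mem_Ioo ⟨by linarith [Real.pi_pos], hbπ⟩
  have hcos : Real.cos b < Real.cos a :=
    Real.cos_lt_cos_of_nonneg_of_le_pi ha0 (by linarith [Real.pi_pos]) hab
  have h1 : a / Real.cos a < b / Real.cos b := by
    calc a / Real.cos a ≤ a / Real.cos b := by gcongr
      _ < b / Real.cos b := by gcongr
  have htb : 0 < Real.tan b := Real.tan_pos_of_pos_of_lt_pi_div_two (by linarith) hbπ
  have hta : Real.tan a ≤ Real.tan b :=
    (Real.tan_lt_tan_of_nonneg_of_lt_pi_div_two ha0 hbπ hab).le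
  have h2 : a * Real.tan a < b * Real.tan b := by
    calc a * Real.tan a ≤ a * Real.tan b := by
          exact mul_le_mul_of_nonneg_left hta ha0
      _ < b * Real.tan b := by exact mul_lt_mul_of_pos_right hab htb
  have h3 : Real.exp (a * Real.tan a) < Real.exp (b * Real.tan b) := Real.exp_lt_exp.2 h2
  exact mul_lt_mul'' h1 h3 (by positivity) (by positivity)

lemma solution_props (r : ℝ) (hr : 0 < r) (s : ℂ) (h1 : 0 < s.im) (h2 : s.im < π)
    (h3 : s * Complex.exp s = Complex.I * r) :
    s.im < π/2 ∧ s.re = s.im * Real.tan s.im ∧ fS s.im = r := by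
  set x := s.re with hx
  set y := s.im with hy
  have hre := congrArg Complex.re h3
  have him := congrArg Complex.im h3
  simp [Complex.mul_re, Complex.mul_im, Complex.exp_re, Complex.exp_im] at hre him
  -- hre : x * (exp x * cos y) - y * (exp x * sin y) = 0
  -- him : x * (exp x * sin y) + y * (exp x * cos y) = r
  have hex : 0 < Real.exp x := Real.exp_pos x
  have hsin : 0 < Real.sin y := Real.sin_pos_of_pos_of_lt_pi h1 h2
  have hreq : x * Real.cos y = y * Real.sin y := by
    have : Real.exp x * (x * Real.cos y - y * Real.sin y) = 0 := by ring_nf; ring_nf at hre; linarith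
    have := mul_eq_zero.1 this
    rcases this with h | h
    · exact absurd h hex.ne'
    · linarith
  have hcos : Real.cos y ≠ 0 := by
    intro h
    rw [h, mul_zero] at hreq
    have : 0 < y * Real.sin y := mul_pos h1 hsin
    linarith
  have hxval : x = y * Real.sin y / Real.cos y := by
    field_simp
    linarith [hreq]
  have hid : x * Real.sin y + y * Real.cos y = y / Real.cos y := by
    rw [hxval]
    field_simp
    ring_nf
    nlinarith [Real.sin_sq_add_cos_sq y]
  have himeq : Real.exp x * (y / Real.cos y) = r := by
    rw [← hid]; ring_nf; ring_nf at him; linarith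
  have hcpos : 0 < Real.cos y := by
    rcases lt_trichotomy (Real.cos y) 0 with h | h | h
    · exfalso
      have : y / Real.cos y < 0 := div_neg_of_pos_of_neg h1 h
      nlinarith
    · exact absurd h hcos
    · exact h
  have hylt : y < π/2 := by
    by_contra h
    push_neg at h
    have := Real.cos_nonpos_of_pi_div_two_le_of_le h (by linarith)
    linarith
  have hxtan : x = y * Real.tan y := by
    rw [Real.tan_eq_sin_div_cos, hxval]; ring
  refine ⟨hylt, hxtan, ?_⟩
  rw [fS, ← hxtan, mul_comm]
  exact himeq

theorem saddle_exists_unique (r : ℝ) (hr : 0 < r) :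
    (∃! t : ℂ, 0 < t.im ∧ t.im < π ∧ t * Complex.exp t = Complex.I * r) ∧
    (∀ t : ℂ, 0 < t.im → t.im < π → t * Complex.exp t = Complex.I * r →
      0 < t.re ∧ t.im < π / 2) := by
  have hpi := Real.pi_pos
  -- find y₀ with fS y₀ = r
  obtain ⟨ε, hε0, hεhalf, hεr⟩ : ∃ ε : ℝ, 0 < ε ∧ ε ≤ 1/2 ∧ ε ≤ 1/(r+1) :=
    ⟨min (1/(r+1)) (1/2), lt_min (by positivity) (by norm_num), min_le_right _ _,
      min_le_left _ _⟩
  obtain ⟨y₁, hy₁⟩ : ∃ y : ℝ, y = π/2 - ε := ⟨_, rfl⟩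
  have hy₁pos : 0 < y₁ := by
    have : (1:ℝ) < π/2 := by linarith [Real.pi_gt_three]
    rw [hy₁]; linarith
  have hy₁lt : y₁ < π/2 := by rw [hy₁]; linarith
  have hcy₁ : 0 < Real.cos y₁ := Real.cos_pos_of_mem_Ioo ⟨by linarith, hy₁lt⟩
  have hfy₁ : r < fS y₁ := by
    have hsin : Real.cos y₁ = Real.sin ε := by
      rw [hy₁, Real.cos_pi_div_two_sub]
    have hsinle : Real.cos y₁ ≤ ε := by rw [hsin]; exact Real.sin_le hε0.le
    have hexp1 : 1 ≤ Real.exp (y₁ * Real.tan y₁) := by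
      apply Real.one_le_exp
      have := Real.tan_pos_of_pos_of_lt_pi_div_two hy₁pos hy₁lt
      positivity
    have h1 : y₁ / Real.cos y₁ ≤ fS y₁ := by
      rw [fS]
      nlinarith [div_pos hy₁pos hcy₁]
    have h2 : r < y₁ / Real.cos y₁ := by
      have hy₁ge : 1 ≤ y₁ := by
        have : (3:ℝ) < π := Real.pi_gt_three
        rw [hy₁]; linarith
      have : y₁ / ε ≤ y₁ / Real.cos y₁ := div_le_div_of_nonneg_left hy₁pos.le hcy₁ hsinle
      have h3 : y₁ / ε ≥ 1 / ε := by gcongr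
      have h4 : (1:ℝ)/ε ≥ r + 1 := by
        rw [ge_iff_le, le_div_iff₀ hε0]
        calc (r+1) * ε ≤ (r+1) * (1/(r+1)) := by gcongr
          _ = 1 := by field_simp
      linarith
    linarith
  -- IVT
  have hcont : ContinuousOn fS (Set.Icc 0 y₁) := by
    apply ContinuousOn.mul
    · apply ContinuousOn.div continuousOn_id Real.continuousOn_cos
      intro z hz
      exact (Real.cos_pos_of_mem_Ioo ⟨by linarith [hz.1], lt_of_le_of_lt hz.2 hy₁lt⟩).ne'
    · apply Real.continuous_exp.comp_continuousOn
      apply ContinuousOn.mul continuousOn_id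
      apply Real.continuousOn_tan_Ioo.mono
      intro z hz
      exact ⟨by linarith [hz.1], lt_of_le_of_lt hz.2 hy₁lt⟩
  have hf0 : fS 0 = 0 := by simp [fS]
  have := intermediate_value_Icc hy₁pos.le hcont
  have hrmem : r ∈ Set.Icc (fS 0) (fS y₁) := ⟨hf0.le.trans hr.le, hfy₁.le⟩
  obtain ⟨y₀, hy₀mem, hy₀⟩ := this hrmem
  have hy₀pos : 0 < y₀ := by
    rcases eq_or_lt_of_le hy₀mem.1 with h | h
    · exfalso; rw [← h, hf0] at hy₀; linarith
    · exact h
  have hy₀lt : y₀ < π/2 := lt_of_le_of_lt hy₀mem.2 hy₁lt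
  have hcy₀ : 0 < Real.cos y₀ := Real.cos_pos_of_mem_Ioo ⟨by linarith, hy₀lt⟩
  -- the solution
  set t₀ : ℂ := ⟨y₀ * Real.tan y₀, y₀⟩ with ht₀
  have ht₀im : t₀.im = y₀ := rfl
  have ht₀re : t₀.re = y₀ * Real.tan y₀ := rfl
  have ht₀eq : t₀ * Complex.exp t₀ = Complex.I * r := by
    apply Complex.ext
    · simp [Complex.mul_re, Complex.exp_re, Complex.exp_im, ht₀re, ht₀im]
      rw [Real.tan_eq_sin_div_cos]
      field_simp
      ring
    · simp [Complex.mul_im, Complex.exp_re, Complex.exp_im, ht₀re, ht₀im]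
      have : y₀ * Real.tan y₀ * Real.sin y₀ + y₀ * Real.cos y₀ = y₀ / Real.cos y₀ := by
        rw [Real.tan_eq_sin_div_cos]
        field_simp
        nlinarith [Real.sin_sq_add_cos_sq y₀]
      calc y₀ * Real.tan y₀ * (Real.exp (y₀ * Real.tan y₀) * Real.sin y₀)
            + y₀ * (Real.exp (y₀ * Real.tan y₀) * Real.cos y₀)
          = (y₀ * Real.tan y₀ * Real.sin y₀ + y₀ * Real.cos y₀)
              * Real.exp (y₀ * Real.tan y₀) := by ring
        _ = (y₀ / Real.cos y₀) * Real.exp (y₀ * Real.tan y₀) := by rw [this]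
        _ = fS y₀ := rfl
        _ = r := hy₀
  constructor
  · refine ⟨t₀, ⟨by rw [ht₀im]; exact hy₀pos, by rw [ht₀im]; linarith, ht₀eq⟩, ?_⟩
    rintro s ⟨hs1, hs2, hs3⟩
    obtain ⟨hslt, hsre, hsf⟩ := solution_props r hr s hs1 hs2 hs3
    have himeq : s.im = y₀ := by
      apply fS_strictMono.injOn ⟨hs1.le, hslt⟩ ⟨hy₀pos.le, hy₀lt⟩
      rw [hsf, hy₀]
    apply Complex.ext
    · rw [hsre, himeq, ht₀re]
    · rw [himeq, ht₀im]
  · intro t h1 h2 h3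
    obtain ⟨hlt, hre, _⟩ := solution_props r hr t h1 h2 h3
    refine ⟨?_, hlt⟩
    rw [hre]
    exact mul_pos h1 (Real.tan_pos_of_pos_of_lt_pi_div_two h1 hlt)
end

section
/- Fix an integer k ≥ 1. For each integer n ≥ 1 let t₀^{(k)}(n) be the unique complex solution of t e^t = n i/(2πk) with 0 < Im t < π. Then t₀^{(k)}(n) = log(n/(2πk)) − log log n + (π/2) i + O(log log n / log n) as n → ∞; that is, |t₀^{(k)}(n) − (log(n/(2πk)) − log log n + (π/2)i)| ≤ C · (log log n)/(log n) for some constant C and all sufficiently large n. -/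
/-!
Write `t = x + iy`. Taking moduli and real parts of `t eᵗ = R i` gives `|t| eˣ = R` and
`x cos y = y sin y`. For large `R` the first forces `x > 0`, hence `0 < y < π/2` and
`0 < π/2 - y < cot y = y / x`, so `y = π/2 + O(1/x)`. Taking logarithms, `x + log |t| = log R`;
since `x ≤ |t| ≤ x + π`, this gives `|t| = log R + O(log log R)`, so
`log |t| = log log R + O(log log R / log R)` and `x = log R - log |t|` has the claimed expansion.
-/

open Real
open Complex (I)

lemma Real.log_le_div_five {x : ℝ} (hx : 100 ≤ x) : log x ≤ x / 5 := by
  have hsqrt : 10 ≤ √x := Real.le_sqrt_of_sq_le (by linarith)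
  have hsq : √x * √x = x := Real.mul_self_sqrt (by linarith)
  have hlog : log x = 2 * log √x := by rw [Real.log_sqrt (by linarith)]; ring
  have := Real.log_le_sub_one_of_pos (x := √x) (by linarith)
  nlinarith

lemma Real.log_sub_log_le_div {a b : ℝ} (ha : 0 < a) (hb : 0 < b) :
    log a - log b ≤ (a - b) / b := by
  rw [← Real.log_div ha.ne' hb.ne', sub_div, div_self hb.ne']
  exact Real.log_le_sub_one_of_pos (div_pos ha hb)

lemma Real.abs_log_sub_log_le_div {a b m : ℝ} (hm : 0 < m) (ha : m ≤ a) (hb : m ≤ b) :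
    |log a - log b| ≤ |a - b| / m := by
  have hab := Real.log_sub_log_le_div (hm.trans_le ha) (hm.trans_le hb)
  have hba := Real.log_sub_log_le_div (hm.trans_le hb) (hm.trans_le ha)
  have hab' : (a - b) / b ≤ |a - b| / m :=
    (div_le_div_of_nonneg_right (le_abs_self _) (hm.trans_le hb).le).trans
      (div_le_div_of_nonneg_left (abs_nonneg _) hm hb)
  have hba' : (b - a) / a ≤ |a - b| / m := by
    rw [abs_sub_comm]
    exact (div_le_div_of_nonneg_right (le_abs_self _) (hm.trans_le ha).le).trans
      (div_le_div_of_nonneg_left (abs_nonneg _) hm ha)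
  rw [abs_le]
  constructor <;> linarith

/-- `x cos y = y sin y` says `cot y = y / x`, and `π/2 - y < tan (π/2 - y) = cot y`. -/
lemma Real.pi_div_two_sub_lt_div_of_mul_cos_eq {x y : ℝ} (hx : 0 < x) (hy : 0 < y)
    (hyπ : y < π) (h : x * cos y = y * sin y) : 0 < π / 2 - y ∧ π / 2 - y < y / x := by
  have hsin : 0 < sin y := Real.sin_pos_of_pos_of_lt_pi hy hyπ
  have hcos : 0 < cos y := by
    by_contra! hcos
    nlinarith [mul_nonpos_of_nonneg_of_nonpos hx.le hcos, mul_pos hy hsin]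
  have hy2 : y < π / 2 := by
    by_contra! hy2
    linarith [Real.cos_nonpos_of_pi_div_two_le_of_le hy2 (by linarith : y ≤ π + π / 2)]
  have hcot : tan (π / 2 - y) = y / x := by
    rw [Real.tan_pi_div_two_sub, Real.tan_eq_sin_div_cos, inv_div,
      div_eq_div_iff hsin.ne' hx.ne']
    linarith
  refine ⟨by linarith, hcot ▸ Real.lt_tan (by linarith) (by linarith)⟩

lemma abs_sub_le_of_add_log_eq {x r ℓ c : ℝ} (hc : 0 ≤ c) (hℓ : c + π ≤ ℓ) (hr : 0 < r)
    (hxr : x ≤ r) (hrx : r ≤ x + π) (hsum : x + log r = ℓ - c) :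
    |r - ℓ| ≤ c + log ℓ + 4 := by
  have hπ3 := Real.pi_gt_three
  have hπ4 := Real.pi_lt_four
  have hr1 : 1 ≤ r := by linarith [Real.log_le_sub_one_of_pos hr]
  have hlogr : 0 ≤ log r := Real.log_nonneg hr1
  have hlogℓ : 0 ≤ log ℓ := Real.log_nonneg (by linarith)
  have hlogr_le : log r ≤ log ℓ + 1 :=
    calc log r ≤ log (2 * ℓ) := Real.log_le_log hr (by linarith)
      _ = log 2 + log ℓ := Real.log_mul two_ne_zero (by linarith)
      _ ≤ log ℓ + 1 := by linarith [Real.log_two_lt_d9]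
  rw [abs_le]
  constructor <;> linarith

lemma abs_log_sub_log_le_of_add_log_eq {x r ℓ c : ℝ} (hc : 0 ≤ c) (hℓ : 4 * c + 100 ≤ ℓ)
    (hr : 0 < r) (hxr : x ≤ r) (hrx : r ≤ x + π) (hsum : x + log r = ℓ - c) :
    ℓ / 2 ≤ r ∧ |log r - log ℓ| ≤ (c + log ℓ + 4) / (ℓ / 2) := by
  have hrℓ := abs_sub_le_of_add_log_eq hc (by linarith [Real.pi_lt_four]) hr hxr hrx hsum
  have hlogℓ := Real.log_le_div_five (by linarith : 100 ≤ ℓ)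
  have hrℓ2 : ℓ / 2 ≤ r := by linarith [abs_le.mp hrℓ]
  exact ⟨hrℓ2, (Real.abs_log_sub_log_le_div (by linarith) hrℓ2 (by linarith)).trans
    (div_le_div_of_nonneg_right hrℓ (by linarith))⟩

section MulExpEq

variable {t : ℂ} {R : ℝ}

lemma norm_mul_exp_re_of_mul_exp_eq (ht : t * Complex.exp t = R * I) :
    ‖t‖ * rexp t.re = |R| := by
  simpa [Complex.norm_exp] using congrArg norm ht

lemma re_mul_cos_im_of_mul_exp_eq (ht : t * Complex.exp t = R * I) :
    t.re * cos t.im = t.im * sin t.im := by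
  have hre := congrArg Complex.re ht
  simp only [Complex.mul_re, Complex.exp_re, Complex.exp_im, Complex.ofReal_re,
    Complex.ofReal_im, Complex.I_re, Complex.I_im] at hre
  have : (t.re * cos t.im - t.im * sin t.im) * rexp t.re = 0 := by
    linear_combination hre
  linarith [(mul_eq_zero.mp this).resolve_right (Real.exp_pos _).ne']

lemma re_add_log_norm_of_mul_exp_eq (hR : R ≠ 0) (ht : t * Complex.exp t = R * I) :
    t.re + log ‖t‖ = log R := by
  have hnorm := norm_mul_exp_re_of_mul_exp_eq ht
  have ht0 : ‖t‖ ≠ 0 := fun h => hR (abs_eq_zero.mp (by simpa [h] using hnorm.symm))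
  rw [← Real.log_abs R, ← hnorm, Real.log_mul ht0 (Real.exp_pos _).ne', Real.log_exp]
  ring

/-- If `t.re ≤ 0` then `R = ‖t‖ e^{t.re} ≤ (-t.re) e^{t.re} + π ≤ 1 + π`. -/
lemma re_pos_of_mul_exp_eq (hR : 1 + π < R) (him : |t.im| ≤ π)
    (ht : t * Complex.exp t = R * I) : 0 < t.re := by
  by_contra! hre
  have hnorm := norm_mul_exp_re_of_mul_exp_eq ht
  rw [abs_of_pos (by linarith [Real.pi_pos])] at hnorm
  have hbound : ‖t‖ ≤ -t.re + π := by
    linarith [Complex.norm_le_abs_re_add_abs_im t, abs_of_nonpos hre]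
  have hmul : -t.re * rexp t.re ≤ 1 := by
    simpa using (Real.mul_exp_neg_le_exp_neg_one (-t.re)).trans
      (Real.exp_le_one_iff.mpr (by norm_num))
  nlinarith [mul_le_mul_of_nonneg_right hbound (Real.exp_pos t.re).le,
    Real.exp_le_one_iff.mpr hre, Real.pi_pos]

theorem norm_sub_log_sub_log_log_le {ℓ c : ℝ} (hR : 0 < R) (hc : 0 ≤ c)
    (hℓ : 4 * c + 100 ≤ ℓ) (hL : log R = ℓ - c) (him : 0 < t.im) (himπ : t.im < π)
    (ht : t * Complex.exp t = R * I) :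
    ‖t - (log R - log ℓ + (π / 2 : ℝ) * I)‖ ≤ (2 * c + 20) * (log ℓ / ℓ) := by
  have hπ3 := Real.pi_gt_three
  have hπ4 := Real.pi_lt_four
  have hℓ0 : 0 < ℓ := by linarith
  have hR1 : 1 + π < R := by
    rw [← Real.exp_log hR, hL]
    linarith [Real.add_one_le_exp (ℓ - c)]
  have hre := re_pos_of_mul_exp_eq hR1 (by rw [abs_of_pos him]; exact himπ.le) ht
  have hr0 : 0 < ‖t‖ := norm_pos_iff.mpr fun h => by simp [h] at him
  have hrx : ‖t‖ ≤ t.re + π := by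
    linarith [Complex.norm_le_abs_re_add_abs_im t, abs_of_pos hre, abs_of_pos him]
  have hsum : t.re + log ‖t‖ = ℓ - c := hL ▸ re_add_log_norm_of_mul_exp_eq hR.ne' ht
  obtain ⟨hrℓ, hlog⟩ :=
    abs_log_sub_log_le_of_add_log_eq hc hℓ hr0 (Complex.re_le_norm t) hrx hsum
  obtain ⟨hy0, hyx⟩ := Real.pi_div_two_sub_lt_div_of_mul_cos_eq hre him himπ
    (re_mul_cos_im_of_mul_exp_eq ht)
  have him_le : |t.im - π / 2| ≤ (π / 2) / (ℓ / 4) := by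
    rw [abs_sub_comm, abs_of_pos hy0]
    exact hyx.le.trans (div_le_div₀ (by linarith) (by linarith) (by linarith) (by linarith))
  have hdiff_re : (t - (log R - log ℓ + (π / 2 : ℝ) * I)).re = -(log ‖t‖ - log ℓ) := by
    simp only [Complex.sub_re, Complex.add_re, Complex.mul_re, Complex.ofReal_re,
      Complex.ofReal_im, Complex.I_re, Complex.I_im]
    linarith
  have hdiff_im : (t - (log R - log ℓ + (π / 2 : ℝ) * I)).im = t.im - π / 2 := by
    simp
  calc ‖t - (log R - log ℓ + (π / 2 : ℝ) * I)‖
      ≤ |log ‖t‖ - log ℓ| + |t.im - π / 2| := by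
        rw [← abs_neg (log ‖t‖ - log ℓ), ← hdiff_re, ← hdiff_im]
        exact Complex.norm_le_abs_re_add_abs_im _
    _ ≤ (c + log ℓ + 4) / (ℓ / 2) + (π / 2) / (ℓ / 4) := add_le_add hlog him_le
    _ = (2 * c + 2 * log ℓ + 8 + 2 * π) / ℓ := by field_simp; ring
    _ ≤ (2 * c + 20) * (log ℓ / ℓ) := by
        have hlogℓ : 1 ≤ log ℓ := by
          rw [Real.le_log_iff_exp_le hℓ0]
          linarith [Real.exp_one_lt_d9]
        rw [mul_div_assoc', div_le_div_iff_of_pos_right hℓ0]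
        nlinarith

end MulExpEq

theorem saddle_asymptotics (k : ℕ) (hk : 1 ≤ k) (t₀ : ℕ → ℂ)
    (ht₀ : ∀ n : ℕ, 1 ≤ n → (0 < (t₀ n).im ∧ (t₀ n).im < π ∧
      t₀ n * Complex.exp (t₀ n) = n * Complex.I / (2 * π * k))) :
    ∃ C : ℝ, ∃ N : ℕ, ∀ n : ℕ, N ≤ n →
      ‖t₀ n -
        ((Real.log (n / (2 * π * k)) : ℂ) - (Real.log (Real.log n) : ℂ) +
          (π / 2 : ℝ) * Complex.I)‖ ≤
      C * (Real.log (Real.log n) / Real.log n) := by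
  have hk' : (1 : ℝ) ≤ k := by exact_mod_cast hk
  have hd : 1 ≤ 2 * π * k := by nlinarith [Real.pi_gt_three]
  set c := log (2 * π * k)
  refine ⟨2 * c + 20, ⌈rexp (4 * c + 100)⌉₊, fun n hn => ?_⟩
  have hn' : rexp (4 * c + 100) ≤ n := Nat.ceil_le.mp hn
  have hn0 : (0 : ℝ) < n := (Real.exp_pos _).trans_le hn'
  obtain ⟨him, himπ, ht⟩ := ht₀ n (Nat.cast_pos.mp hn0)
  refine norm_sub_log_sub_log_log_le (by positivity) (Real.log_nonneg hd)
    ((Real.le_log_iff_exp_le hn0).mpr hn') (Real.log_div hn0.ne' (by positivity)) him himπ ?_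
  rw [ht]
  push_cast
  ring
end

section
/- For each integer n ≥ 1 let t₀ = t₀(n) be the unique complex solution of t e^t = n i/(2π) with 0 < Im t₀ < π, and set A(n) = Re(log t₀ − 1/t₀) and B(n) = 2√(2π)·|t₀|/|1 + t₀|^{1/2}. Then A(n)/log log n → 1 and B(n)/√(8π log n) → 1 as n → ∞. -/
/-!
Taking norms in `t e^t = w` gives `log ‖t‖ + Re t = log ‖w‖`. Since `Im t` stays bounded,
so does `‖t‖ - Re t`; this first forces `Re t → ∞` and then `‖t‖ ~ log ‖w‖`, the error term
`log ‖t‖` being negligible against `‖t‖`. For `w = n i / 2π` this gives `‖t₀‖ ~ log n`, hence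
`Re log t₀ = log ‖t₀‖ ~ log log n` while `1 / t₀ → 0`, and `‖1 + t₀‖ ~ ‖t₀‖ ~ log n`.
-/

open Complex Real Filter Topology

open Asymptotics

section

variable {α : Type*} {l : Filter α}

theorem Asymptotics.IsEquivalent.sqrt {u v : α → ℝ} (h : u ~[l] v) (hv : 0 ≤ v) :
    (fun a => √(u a)) ~[l] fun a => √(v a) := by
  simp only [Real.sqrt_eq_rpow]
  exact h.rpow hv

theorem isEquivalent_norm_const_add {E : Type*} [SeminormedAddCommGroup E] (c : E) {u : α → E}
    (hu : Tendsto (fun a => ‖u a‖) l atTop) :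
    (fun a => ‖c + u a‖) ~[l] fun a => ‖u a‖ := by
  have hc : (fun _ => ‖c‖) =o[l] fun a => ‖u a‖ :=
    isLittleO_const_left.2 (Or.inr (by simpa [Function.comp_def] using hu))
  refine IsLittleO.isEquivalent (IsBigO.trans_isLittleO (IsBigO.of_bound' ?_) hc)
  filter_upwards with a
  simpa using abs_norm_sub_norm_le (c + u a) (u a)

end

theorem Real.isEquivalent_log_div_const {a : ℝ} (ha : a ≠ 0) :
    (fun x => Real.log (x / a)) ~[atTop] Real.log := by
  refine (IsEquivalent.refl.add_const_of_norm_tendsto_atTop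
    (c := -Real.log a) (tendsto_norm_atTop_atTop.comp Real.tendsto_log_atTop)).congr_left ?_
  filter_upwards [eventually_ne_atTop 0] with x hx
  rw [Real.log_div hx ha, sub_eq_add_neg]

theorem Real.sqrt_eight_pi_mul (x : ℝ) : √(8 * π * x) = 2 * √(2 * π) * √x := by
  rw [show 8 * π * x = 2 ^ 2 * (2 * π) * x by ring, Real.sqrt_mul (by positivity),
    Real.sqrt_mul (by positivity), Real.sqrt_sq two_pos.le]

namespace Complex

theorem log_norm_add_re_of_mul_exp_eq {t w : ℂ} (h : t * exp t = w) (hw : w ≠ 0) :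
    Real.log ‖t‖ + t.re = Real.log ‖w‖ := by
  have ht : t ≠ 0 := by rintro rfl; simp [← h] at hw
  rw [← h, norm_mul, norm_exp, Real.log_mul (norm_ne_zero_iff.2 ht) (Real.exp_pos _).ne',
    Real.log_exp]

variable {α : Type*} {l : Filter α} {t w : α → ℂ} {c : ℝ}

theorem tendsto_re_atTop_of_mul_exp_eq (him : ∀ᶠ a in l, |(t a).im| ≤ c)
    (htw : ∀ᶠ a in l, t a * exp (t a) = w a) (hw : Tendsto (fun a => ‖w a‖) l atTop) :
    Tendsto (fun a => (t a).re) l atTop := by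
  have hL := Real.tendsto_log_atTop.comp hw
  refine tendsto_atTop_mono' l ?_
    ((tendsto_atTop_add_const_right _ (-c) hL).atTop_div_const two_pos)
  filter_upwards [him, htw, hw.eventually_gt_atTop 0, hL.eventually_gt_atTop c]
    with a hima hta hwa hLa
  have hlog := log_norm_add_re_of_mul_exp_eq hta (norm_pos_iff.1 hwa)
  have hnorm : Real.log ‖t a‖ ≤ |(t a).re| + c :=
    (Real.log_le_self (norm_nonneg _)).trans ((norm_le_abs_re_add_abs_im _).trans (by linarith))
  -- `log ‖w‖ ≤ |Re t| + Re t + c` rules out `Re t < 0` once `log ‖w‖ > c`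
  simp only [Function.comp_apply] at hLa ⊢
  cases abs_cases (t a).re <;> linarith

theorem isEquivalent_norm_log_norm_of_mul_exp_eq (him : ∀ᶠ a in l, |(t a).im| ≤ c)
    (htw : ∀ᶠ a in l, t a * exp (t a) = w a) (hw : Tendsto (fun a => ‖w a‖) l atTop) :
    (fun a => ‖t a‖) ~[l] fun a => Real.log ‖w a‖ := by
  have hre := tendsto_re_atTop_of_mul_exp_eq him htw hw
  have hnorm : Tendsto (fun a => ‖t a‖) l atTop :=
    tendsto_atTop_mono (fun a => re_le_norm (t a)) hre
  have hsmall : (fun a => Real.log ‖t a‖ + c) =o[l] fun a => ‖t a‖ :=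
    (Real.isLittleO_log_id_atTop.comp_tendsto hnorm).add
      (isLittleO_const_left.2 (Or.inr (by simpa [Function.comp_def] using hnorm)))
  refine (IsLittleO.isEquivalent (IsBigO.trans_isLittleO (IsBigO.of_bound' ?_) hsmall)).symm
  filter_upwards [him, htw, hw.eventually_gt_atTop 0, hre.eventually_ge_atTop 1]
    with a hima hta hwa hrea
  have hlog := log_norm_add_re_of_mul_exp_eq hta (norm_pos_iff.1 hwa)
  have hle : ‖t a‖ ≤ (t a).re + c :=
    (norm_le_abs_re_add_abs_im _).trans (by rw [abs_of_nonneg (by linarith)]; linarith)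
  have hge := re_le_norm (t a)
  have hlog_nonneg : 0 ≤ Real.log ‖t a‖ := Real.log_nonneg (by linarith)
  have hc : 0 ≤ c := (abs_nonneg _).trans hima
  -- `log ‖w‖ - ‖t‖ = log ‖t‖ - (‖t‖ - Re t)` with `0 ≤ ‖t‖ - Re t ≤ c`
  rw [Pi.sub_apply, Real.norm_eq_abs, Real.norm_eq_abs, abs_le,
    abs_of_nonneg (by linarith : 0 ≤ Real.log ‖t a‖ + c)]
  constructor <;> linarith

end Complex

theorem isEquivalent_norm_log_natCast {t : ℕ → ℂ}
    (ht : ∀ n : ℕ, 1 ≤ n → |(t n).im| ≤ π ∧ t n * exp (t n) = n * I / (2 * π)) :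
    (fun n => ‖t n‖) ~[atTop] fun n => Real.log n := by
  have hw : ∀ n : ℕ, ‖(n : ℂ) * I / (2 * π)‖ = n / (2 * π) := fun n => by
    simp [abs_of_pos pi_pos]
  refine (isEquivalent_norm_log_norm_of_mul_exp_eq (c := π) (w := fun n : ℕ => n * I / (2 * π))
    ?_ ?_ ?_).trans ?_
  · filter_upwards [eventually_ge_atTop 1] with n hn using (ht n hn).1
  · filter_upwards [eventually_ge_atTop 1] with n hn using (ht n hn).2
  · simpa only [hw] using tendsto_natCast_atTop_atTop.atTop_div_const (by positivity)
  · simp only [hw]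
    exact (Real.isEquivalent_log_div_const (by positivity)).comp_tendsto
      tendsto_natCast_atTop_atTop

theorem A_B_leading_asymptotics (t₀ : ℕ → ℂ)
    (ht₀ : ∀ n : ℕ, 1 ≤ n → (0 < (t₀ n).im ∧ (t₀ n).im < π ∧
      t₀ n * Complex.exp (t₀ n) = n * Complex.I / (2 * π))) :
    Tendsto (fun n : ℕ =>
        (Complex.log (t₀ n) - 1 / t₀ n).re / Real.log (Real.log n)) atTop (nhds 1) ∧
    Tendsto (fun n : ℕ =>
        (2 * Real.sqrt (2 * π) * ‖t₀ n‖ / Real.sqrt (‖1 + t₀ n‖)) /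
          Real.sqrt (8 * π * Real.log n)) atTop (nhds 1) := by
  have hlog : Tendsto (fun n : ℕ => Real.log n) atTop atTop :=
    Real.tendsto_log_atTop.comp tendsto_natCast_atTop_atTop
  have hr : (fun n => ‖t₀ n‖) ~[atTop] fun n => Real.log n :=
    isEquivalent_norm_log_natCast fun n hn =>
      ⟨abs_le.2 ⟨by linarith [(ht₀ n hn).1, pi_pos], (ht₀ n hn).2.1.le⟩, (ht₀ n hn).2.2⟩
  have hr_top : Tendsto (fun n => ‖t₀ n‖) atTop atTop := hr.symm.tendsto_atTop hlog
  constructor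
  · have hloglog := Real.tendsto_log_atTop.comp hlog
    have hinv : Tendsto (fun n => (1 / t₀ n).re) atTop (𝓝 0) := by
      simpa only [one_div, zero_re, Function.comp_def] using
        (continuous_re.tendsto 0).comp
        (tendsto_inv₀_cobounded.comp (tendsto_norm_atTop_iff_cobounded.1 hr_top))
    have hA : (fun n => (Complex.log (t₀ n) - 1 / t₀ n).re) ~[atTop]
        fun n => Real.log (Real.log n) := by
      have hsmall :
          (fun n => (1 / t₀ n).re) =o[atTop] fun n => Real.log (Real.log n) :=
        (hinv.isBigO_one ℝ).trans_isLittleO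
          ((isLittleO_one_left_iff ℝ).2 (tendsto_norm_atTop_atTop.comp hloglog))
      refine ((hr.log hlog).sub_isLittleO hsmall).congr_left ?_
      filter_upwards with n
      simp [log_re]
    exact (isEquivalent_iff_tendsto_one (hloglog.eventually_ne_atTop 0)).1 hA
  · have h1t : (fun n => ‖1 + t₀ n‖) ~[atTop] fun n => Real.log n :=
      (isEquivalent_norm_const_add 1 hr_top).trans hr
    have hB : (fun n => 2 * √(2 * π) * ‖t₀ n‖ / √‖1 + t₀ n‖) ~[atTop]
        fun n => √(8 * π * Real.log n) := by
      refine ((IsEquivalent.refl (u := fun _ => 2 * √(2 * π))).mul hr |>.div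
        (h1t.sqrt fun n => Real.log_natCast_nonneg n)).congr_right ?_
      filter_upwards with n
      rw [Pi.div_apply, Pi.mul_apply, mul_div_assoc, Real.div_sqrt, Real.sqrt_eight_pi_mul]
    refine (isEquivalent_iff_tendsto_one ?_).1 hB
    filter_upwards [hlog.eventually_gt_atTop 0] with n hn
    positivity
end

section
/- For integers n, k ≥ 1 let t₀^{(k)}(n) be the unique complex solution of t e^t = n i/(2πk) with 0 < Im t < π, and set A_k(n) = Re(log t₀^{(k)}(n) − 1/t₀^{(k)}(n)). Then for each fixed integer k ≥ 2 and every real p, n^p · exp( n·(A_k(n) − A_1(n)) ) → 0 as n → ∞; i.e., the saddle heights e^{n A_k(n)} for k ≥ 2 are smaller than e^{n A_1(n)} by more than any power of n. -/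
/-!
Write `t = x + iy` for a solution of `t e^t = c i` with `0 < y < π`. The real and imaginary
parts of the equation force `x > 0`, and taking norms gives `e^x |t| = c`, so `x → ∞` with `c`
while `|t| - x ≤ y² / 2x` stays tiny; moreover `Re (log t - 1/t) = log |t| - x / |t|²`.
For the parameters `c_k = n / 2πk ≤ c_1 / 2` the identity `e^x |t| = c` makes the real parts
differ by at least `1/2`, hence `|t₁| - |t_k| ≥ 2/5`, so `log (|t₁| / |t_k|) ≥ 1 / (5 log n)`
while the correction terms `x / |t|²` are in the favourable order. Thus the exponent is at most
`-n / (5 log n)`, and `exp (-n / (5 log n))` beats every power of `n`.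
-/

open Complex Real Filter Topology

theorem half_le_sub_of_two_mul_exp_mul_le {a b r s : ℝ} (ha : 100 ≤ a) (har : a ≤ r)
    (hsb : s ≤ b + 1 / 10) (h : 2 * (Real.exp a * r) ≤ Real.exp b * s) :
    1 / 2 ≤ b - a := by
  have hr : 0 < r := by linarith
  have hs : 0 < s := pos_of_mul_pos_right (h.trans_lt' (by positivity)) (exp_pos b).le
  have hlog : Real.log 2 + a + Real.log r ≤ b + Real.log s := by
    have := Real.log_le_log (by positivity) h
    rwa [Real.log_mul (by positivity) hs.ne', Real.log_mul two_ne_zero (by positivity),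
      Real.log_mul (by positivity) hr.ne', Real.log_exp, Real.log_exp, ← add_assoc] at this
  have hquot : Real.log s - Real.log r ≤ (s - r) / r := by
    rw [← Real.log_div hs.ne' hr.ne', sub_div, div_self hr.ne']
    exact Real.log_le_sub_one_of_pos (div_pos hs hr)
  by_contra! hlt
  have : (s - r) / r ≤ 6 / 1000 := by
    rw [div_le_iff₀ hr]; nlinarith
  linarith [Real.log_two_gt_d9]

theorem div_sq_le_div_sq_of_half_le_sub {a b r s : ℝ} (ha : 1 ≤ a) (har : a ≤ r)
    (hra : r ≤ a + 1 / 10) (hbs : b ≤ s) (hab : 1 / 2 ≤ b - a) :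
    b / s ^ 2 ≤ a / r ^ 2 := by
  have hb : 0 < b := by linarith
  have hs : 0 < s := by linarith
  calc b / s ^ 2 ≤ 1 / b := by
        rw [div_le_div_iff₀ (by positivity) hb]; nlinarith
    _ ≤ 1 / (a + 1 / 2) := one_div_le_one_div_of_le (by positivity) (by linarith)
    _ ≤ a / (a + 1 / 10) ^ 2 := by
        rw [div_le_div_iff₀ (by positivity) (by positivity)]; nlinarith
    _ ≤ a / r ^ 2 :=
        div_le_div_of_nonneg_left (by positivity) (by nlinarith) (by gcongr; linarith)

theorem one_div_le_log_sub_log {r s L : ℝ} (hr : 0 < r) (hrs : 2 / 5 ≤ s - r)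
    (hsL : s ≤ 2 * L) : 1 / (5 * L) ≤ Real.log s - Real.log r := by
  have hs : 0 < s := by linarith
  calc 1 / (5 * L) = (2 / 5) / (2 * L) := by field_simp
    _ ≤ (s - r) / s := div_le_div₀ (by linarith) hrs hs hsL
    _ = 1 - (s / r)⁻¹ := by field_simp
    _ ≤ Real.log (s / r) := Real.one_sub_inv_le_log_of_pos (div_pos hs hr)
    _ = Real.log s - Real.log r := Real.log_div hs.ne' hr.ne'

theorem one_div_le_sub_of_two_mul_exp_mul_le {a b r s L : ℝ} (ha : 100 ≤ a)
    (har : a ≤ r) (hra : r ≤ a + 1 / 10) (hbs : b ≤ s) (hsb : s ≤ b + 1 / 10)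
    (h : 2 * (Real.exp a * r) ≤ Real.exp b * s) (hbL : b ≤ L) :
    1 / (5 * L) ≤ (Real.log s - b / s ^ 2) - (Real.log r - a / r ^ 2) := by
  have hab := half_le_sub_of_two_mul_exp_mul_le ha har hsb h
  have hlog := one_div_le_log_sub_log (by linarith : 0 < r) (by linarith : 2 / 5 ≤ s - r)
    (by linarith : s ≤ 2 * L)
  linarith [div_sq_le_div_sq_of_half_le_sub (by linarith) har hra hbs hab]

theorem two_mul_div_mul_le_div {x y K : ℝ} (hx : 0 ≤ x) (hy : 0 < y) (hK : 2 ≤ K) :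
    2 * (x / (y * K)) ≤ x / y := by
  rw [mul_div_assoc', div_le_div_iff₀ (by positivity) hy, mul_comm y K, ← mul_assoc]
  exact mul_le_mul_of_nonneg_right (by nlinarith) hy.le

structure IsSaddlePoint (c : ℝ) (t : ℂ) : Prop where
  im_pos : 0 < t.im
  im_lt_pi : t.im < π
  mul_exp_eq : t * Complex.exp t = c * I

noncomputable def saddleExponent (t : ℂ) : ℝ := (Complex.log t - 1 / t).re

theorem saddleExponent_eq (t : ℂ) : saddleExponent t = Real.log ‖t‖ - t.re / ‖t‖ ^ 2 := by
  rw [saddleExponent, sub_re, log_re, one_div, inv_re, normSq_eq_norm_sq]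

theorem Complex.norm_sub_re_le {z : ℂ} (hz : 0 < z.re) :
    ‖z‖ - z.re ≤ z.im ^ 2 / (2 * z.re) := by
  have hnorm : ‖z‖ ^ 2 = z.re ^ 2 + z.im ^ 2 := by rw [Complex.sq_norm, normSq_apply]; ring
  rw [le_div_iff₀ (by positivity)]
  nlinarith [re_le_norm z]

namespace IsSaddlePoint

variable {c : ℝ} {t : ℂ}

theorem re_pos (ht : IsSaddlePoint c t) (hc : 0 < c) : 0 < t.re := by
  have hre := congrArg re ht.mul_exp_eq
  have him := congrArg im ht.mul_exp_eq
  simp only [mul_re, mul_im, exp_re, exp_im, ofReal_re, ofReal_im, I_re, I_im] at hre him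
  set x := t.re
  set y := t.im
  have hy := ht.im_pos
  have hsin : 0 < Real.sin y := sin_pos_of_pos_of_lt_pi hy ht.im_lt_pi
  have hcross : x * Real.cos y = y * Real.sin y := by nlinarith [exp_pos x]
  have hc' : Real.exp x * (x * Real.sin y + y * Real.cos y) = c := by linear_combination him
  have hsum : 0 < x * Real.sin y + y * Real.cos y :=
    pos_of_mul_pos_right (hc' ▸ hc) (exp_pos x).le
  have hcos : 0 < Real.cos y := by
    by_contra! hcos
    have hx : x < 0 := by nlinarith
    nlinarith
  exact pos_of_mul_pos_left (hcross ▸ mul_pos hy hsin) hcos.le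

theorem exp_re_mul_norm (ht : IsSaddlePoint c t) (hc : 0 ≤ c) : Real.exp t.re * ‖t‖ = c := by
  have h := congrArg norm ht.mul_exp_eq
  rwa [norm_mul, norm_mul, norm_exp, norm_I, mul_one, norm_real, Real.norm_of_nonneg hc,
    mul_comm] at h

theorem le_re (ht : IsSaddlePoint c t) (hc : 0 < c) {M : ℝ} (hM : Real.exp M * (M + 4) ≤ c) :
    M ≤ t.re := by
  by_contra! hlt
  have hre := ht.re_pos hc
  have hnorm : ‖t‖ < M + 4 := by
    have := norm_le_abs_re_add_abs_im t
    rw [abs_of_pos hre, abs_of_pos ht.im_pos] at this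
    linarith [ht.im_lt_pi, pi_lt_four]
  have := ht.exp_re_mul_norm hc.le
  have : Real.exp t.re * ‖t‖ < Real.exp M * (M + 4) := by gcongr
  linarith

theorem norm_le_re_add (ht : IsSaddlePoint c t) (hre : 100 ≤ t.re) : ‖t‖ ≤ t.re + 1 / 10 := by
  have h := norm_sub_re_le (z := t) (by linarith)
  have him : t.im ^ 2 ≤ 16 := by nlinarith [ht.im_pos, ht.im_lt_pi, pi_lt_four]
  have : t.im ^ 2 / (2 * t.re) ≤ 1 / 10 := by
    rw [div_le_iff₀ (by positivity)]; nlinarith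
  linarith

theorem re_le_log (ht : IsSaddlePoint c t) (hc : 0 < c) (hre : 1 ≤ t.re) :
    t.re ≤ Real.log c := by
  rw [Real.le_log_iff_exp_le hc, ← ht.exp_re_mul_norm hc.le]
  exact le_mul_of_one_le_right (exp_pos _).le (hre.trans (re_le_norm t))

theorem saddleExponent_sub_le {u : ℂ} {c' L : ℝ} (ht : IsSaddlePoint c t)
    (hu : IsSaddlePoint c' u) (hc : 0 < c) (hcc' : 2 * c ≤ c') (ht100 : 100 ≤ t.re)
    (hu100 : 100 ≤ u.re) (hL : Real.log c' ≤ L) :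
    saddleExponent t - saddleExponent u ≤ -(1 / (5 * L)) := by
  have hc' : 0 < c' := by linarith
  have key := one_div_le_sub_of_two_mul_exp_mul_le ht100 (re_le_norm t)
    (ht.norm_le_re_add ht100) (re_le_norm u) (hu.norm_le_re_add hu100)
    (by rw [ht.exp_re_mul_norm hc.le, hu.exp_re_mul_norm hc'.le]; exact hcc')
    ((hu.re_le_log hc' (by linarith)).trans hL)
  rw [saddleExponent_eq, saddleExponent_eq]
  linarith

end IsSaddlePoint

theorem tendsto_rpow_mul_exp_neg_mul_div_log (p : ℝ) {ε : ℝ} (hε : 0 < ε) :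
    Tendsto (fun x : ℝ => x ^ p * Real.exp (-(ε * (x / Real.log x)))) atTop (𝓝 0) := by
  have hexp : Tendsto (fun u : ℝ => p * u - ε * (Real.exp u / u)) atTop atBot := by
    refine tendsto_atBot_mono' atTop ?_ tendsto_neg_atTop_atBot
    filter_upwards [(tendsto_exp_div_pow_atTop 2).eventually_ge_atTop ((|p| + 1) / ε),
      eventually_gt_atTop 0] with u hu hu0
    have : (|p| + 1) * u ≤ ε * (Real.exp u / u) := by
      rw [div_le_iff₀ hε] at hu
      calc (|p| + 1) * u ≤ Real.exp u / u ^ 2 * ε * u := by gcongr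
        _ = ε * (Real.exp u / u) := by field_simp
    nlinarith [le_abs_self p]
  refine (tendsto_exp_atBot.comp (hexp.comp tendsto_log_atTop)).congr' ?_
  filter_upwards [eventually_gt_atTop 0] with x hx
  simp only [Function.comp, exp_log hx, rpow_def_of_pos hx, ← Real.exp_add]
  ring_nf

theorem saddle_heights_k_ge_two_negligible (t₀ : ℕ → ℕ → ℂ)
    (ht₀ : ∀ k : ℕ, 1 ≤ k → ∀ n : ℕ, 1 ≤ n → (0 < (t₀ k n).im ∧ (t₀ k n).im < π ∧
      t₀ k n * Complex.exp (t₀ k n) = n * Complex.I / (2 * π * k)))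
    (k : ℕ) (hk : 2 ≤ k) (p : ℝ) :
    Tendsto (fun n : ℕ =>
        (n : ℝ) ^ p * Real.exp ((n : ℝ) *
          ((Complex.log (t₀ k n) - 1 / t₀ k n).re - (Complex.log (t₀ 1 n) - 1 / t₀ 1 n).re)))
      atTop (nhds 0) := by
  have hk1 : 1 ≤ k := by omega
  have hsaddle (j : ℕ) (hj : 1 ≤ j) (n : ℕ) (hn : 1 ≤ n) :
      IsSaddlePoint (n / (2 * π * j)) (t₀ j n) := by
    obtain ⟨him, himπ, heq⟩ := ht₀ j hj n hn
    exact ⟨him, himπ, by rw [heq]; push_cast; ring⟩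
  have hlarge (j : ℕ) (hj : 1 ≤ j) : ∀ᶠ n : ℕ in atTop, 100 ≤ (t₀ j n).re := by
    have hc : Tendsto (fun n : ℕ => (n : ℝ) / (2 * π * j)) atTop atTop :=
      tendsto_natCast_atTop_atTop.atTop_div_const (by positivity)
    filter_upwards [hc.eventually_ge_atTop (Real.exp 100 * (100 + 4)), eventually_ge_atTop 1]
      with n hcn hn
    exact (hsaddle j hj n hn).le_re (by positivity) hcn
  have hgap : ∀ᶠ n : ℕ in atTop, (n : ℝ) * (saddleExponent (t₀ k n) - saddleExponent (t₀ 1 n))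
      ≤ -(1 / 5 * (n / Real.log n)) := by
    filter_upwards [hlarge k hk1, hlarge 1 le_rfl, eventually_ge_atTop 1] with n htk ht1 hn
    have hn0 : (0 : ℝ) < n := by exact_mod_cast hn
    have htwo : 2 * (n / (2 * π * k)) ≤ n / (2 * π * (1 : ℕ)) := by
      simpa using two_mul_div_mul_le_div hn0.le (by positivity) (by exact_mod_cast hk)
    have hlog : Real.log (n / (2 * π * (1 : ℕ))) ≤ Real.log n :=
      Real.log_le_log (by positivity) (div_le_self hn0.le (by simp; linarith [pi_gt_three]))
    have := (hsaddle k hk1 n hn).saddleExponent_sub_le (hsaddle 1 le_rfl n hn) (by positivity)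
      htwo htk ht1 hlog
    calc (n : ℝ) * (saddleExponent (t₀ k n) - saddleExponent (t₀ 1 n))
        ≤ n * -(1 / (5 * Real.log n)) := mul_le_mul_of_nonneg_left this hn0.le
      _ = -(1 / 5 * (n / Real.log n)) := by ring
  refine squeeze_zero' (.of_forall fun n => by positivity) ?_
    ((tendsto_rpow_mul_exp_neg_mul_div_log p (by norm_num : (0 : ℝ) < 1 / 5)).comp
      tendsto_natCast_atTop_atTop)
  filter_upwards [hgap] with n hn
  exact mul_le_mul_of_nonneg_left (exp_le_exp.mpr hn) (by positivity)
end

section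
/- For real α with 0 < α ≤ 1, the function s ↦ ζ(s, α) − 1/(s−1), where ζ(s, α) is the Hurwitz zeta function, extends holomorphically to s = 1, and its value at s = 1 equals −Γ'(α)/Γ(α) (minus the digamma function at α); that is, the zeroth generalized Stieltjes constant satisfies γ₀(α) = −Γ'(α)/Γ(α). -/
open Complex Filter Topology HurwitzZeta

/-- The entire extension of `ζ(s,α) - 1/(s-1)`. -/
noncomputable def hurwitzZetaSubPole (α : ℝ) : ℂ → ℂ :=
  Function.update (fun s : ℂ => hurwitzZeta (α : UnitAddCircle) s - 1 / (s - 1)) 1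
    (limUnder (𝓝[≠] (1 : ℂ)) (fun s : ℂ => hurwitzZeta (α : UnitAddCircle) s - 1 / (s - 1)))

/-- The generalized Stieltjes constants `γ_n(α) = (-1)^n g^{(n)}(1)`,
where `g(s) = ζ(s,α) - 1/(s-1)`. -/
noncomputable def stieltjesGammaGen (n : ℕ) (α : ℝ) : ℝ :=
  ((-1 : ℝ) ^ n) * (iteratedDeriv n (hurwitzZetaSubPole α) 1).re

/-!
Split `ζ(s, α) - 1/(s-1) = (ζ(s, α) - ζ(s)) + (ζ(s) - 1/(s-1))`. The second summand is the
entire function `riemannZeta₀`, equal to `γ` at `s = 1`. The first is entire, and for `Re s > 1`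
it equals `α^{-s} - ∑ₙ ((n+1)^{-s} - (n+1+α)^{-s})`; by the mean value theorem the terms are
`O(n^{-3/2})` uniformly near `s = 1`, so its value at `1` is `1/α - ∑ₙ (1/(n+1) - 1/(n+1+α))`.
Differentiating Gauss' product formula for `log Γ` termwise (the derivatives converge uniformly)
gives `Γ'(x)/Γ(x) = -γ - 1/x + ∑ₙ (1/(n+1) - 1/(n+1+x))`, and the constants combine.
-/

namespace Real

lemma BohrMollerup.hasDerivAt_logGammaSeq {x : ℝ} (hx : 0 < x) (n : ℕ) :
    HasDerivAt (logGammaSeq · n) (log n - ∑ m ∈ Finset.range (n + 1), (x + m)⁻¹) x := by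
  refine ((hasDerivAt_mul_const (log n)).add_const _).sub (.fun_sum fun m _ => ?_)
  simpa using ((hasDerivAt_id x).add_const (m : ℝ)).log (by positivity)

lemma log_sub_sum_range_inv_eq (x : ℝ) (n : ℕ) :
    log n - ∑ m ∈ Finset.range (n + 1), (x + m)⁻¹ =
      (log n - harmonic n) - x⁻¹ +
        ∑ m ∈ Finset.range n, (((m : ℝ) + 1)⁻¹ - ((m : ℝ) + 1 + x)⁻¹) := by
  simp only [harmonic, Finset.sum_range_succ', Finset.sum_sub_distrib]
  push_cast
  ring_nf

lemma abs_inv_natCast_add_one_sub_inv_le {x : ℝ} (hx : 0 ≤ x) (n : ℕ) :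
    |((n : ℝ) + 1)⁻¹ - ((n : ℝ) + 1 + x)⁻¹| ≤ x / ((n : ℝ) + 1) ^ 2 := by
  have h : ((n : ℝ) + 1)⁻¹ - ((n : ℝ) + 1 + x)⁻¹ = x / (((n : ℝ) + 1) * ((n : ℝ) + 1 + x)) := by
    field_simp; ring
  rw [h, abs_of_nonneg (by positivity), sq]
  exact div_le_div_of_nonneg_left hx (by positivity)
    (mul_le_mul_of_nonneg_left (by linarith) (by positivity))

theorem deriv_Gamma_div_Gamma {x : ℝ} (hx : 0 < x) :
    deriv Gamma x / Gamma x =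
      -eulerMascheroniConstant - x⁻¹ + ∑' n : ℕ, (((n : ℝ) + 1)⁻¹ - ((n : ℝ) + 1 + x)⁻¹) := by
  have hΓ : DifferentiableAt ℝ Gamma x :=
    differentiableAt_Gamma fun m => by linarith [(m.cast_nonneg : (0 : ℝ) ≤ m)]
  have hlog : HasDerivAt (fun y => log (Gamma y)) (deriv Gamma x / Gamma x) x :=
    hΓ.hasDerivAt.log (Gamma_pos_of_pos hx).ne'
  have hsum : TendstoUniformlyOn
      (fun n y => ∑ m ∈ Finset.range n, (((m : ℝ) + 1)⁻¹ - ((m : ℝ) + 1 + y)⁻¹))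
      (fun y => ∑' m : ℕ, (((m : ℝ) + 1)⁻¹ - ((m : ℝ) + 1 + y)⁻¹)) atTop (Set.Ioo 0 (x + 1)) := by
    refine tendstoUniformlyOn_tsum_nat ((summable_nat_add_iff 1).mpr
      (summable_one_div_nat_pow.mpr one_lt_two) |>.mul_left (x + 1)) fun m y hy => ?_
    rw [norm_eq_abs]
    refine (abs_inv_natCast_add_one_sub_inv_le hy.1.le m).trans ?_
    push_cast
    rw [mul_one_div]
    gcongr
    exact hy.2.le
  have hconst : TendstoUniformlyOn (fun (n : ℕ) (_ : ℝ) => log n - harmonic n)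
      (fun _ => -eulerMascheroniConstant) atTop (Set.Ioo 0 (x + 1)) := by
    refine Tendsto.tendstoUniformlyOn_const ?_ _
    simpa using tendsto_harmonic_sub_log.neg
  have hinv : TendstoUniformlyOn (fun (_ : ℕ) (y : ℝ) => y⁻¹) (fun y => y⁻¹) atTop
      (Set.Ioo 0 (x + 1)) := fun u hu => .of_forall fun _ _ _ => refl_mem_uniformity hu
  refine hlog.unique (hasDerivAt_of_tendstoUniformlyOn (s := Set.Ioo 0 (x + 1))
    (g' := fun y => -eulerMascheroniConstant - y⁻¹ +
      ∑' m : ℕ, (((m : ℝ) + 1)⁻¹ - ((m : ℝ) + 1 + y)⁻¹)) isOpen_Ioo ?_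
    (.of_forall fun n y hy => BohrMollerup.hasDerivAt_logGammaSeq hy.1 n)
    (fun y hy => BohrMollerup.tendsto_log_gamma hy.1) ⟨hx, lt_add_one x⟩)
  refine ((hconst.sub hinv).add hsum).congr (.of_forall fun n y _ => ?_)
  exact (log_sub_sum_range_inv_eq y n).symm

end Real

lemma norm_ofReal_cpow_neg_sub_le {s : ℂ} (hs : -1 ≤ s.re) {a b : ℝ} (ha : 0 < a) (hab : a ≤ b) :
    ‖(a : ℂ) ^ (-s) - (b : ℂ) ^ (-s)‖ ≤ ‖s‖ * a ^ (-s.re - 1) * (b - a) := by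
  have hderiv : ∀ t ∈ Set.Icc a b, HasDerivWithinAt (fun t : ℝ => (t : ℂ) ^ (-s))
      (-s * (t : ℂ) ^ (-s - 1)) (Set.Icc a b) t := fun t ht =>
    ((hasStrictDerivAt_cpow_const (ofReal_mem_slitPlane.mpr (ha.trans_le ht.1))).hasDerivAt
      |>.comp_ofReal).hasDerivWithinAt
  have hbound : ∀ t ∈ Set.Icc a b, ‖-s * (t : ℂ) ^ (-s - 1)‖ ≤ ‖s‖ * a ^ (-s.re - 1) := by
    intro t ht
    rw [norm_mul, norm_neg, norm_cpow_eq_rpow_re_of_pos (ha.trans_le ht.1)]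
    gcongr
    exact Real.rpow_le_rpow_of_nonpos ha ht.1 (by simp only [sub_re, neg_re, one_re]; linarith)
  simpa [abs_of_nonpos (sub_nonpos.mpr hab)] using
    (convex_Icc a b).norm_image_sub_le_of_norm_hasDerivWithin_le hderiv hbound
      (Set.right_mem_Icc.mpr hab) (Set.left_mem_Icc.mpr hab)

lemma continuousAt_tsum_cpow_neg_sub {α : ℝ} (hα : 0 ≤ α) :
    ContinuousAt (fun s : ℂ => ∑' n : ℕ,
      ((((n : ℝ) + 1 : ℝ) : ℂ) ^ (-s) - (((n : ℝ) + 1 + α : ℝ) : ℂ) ^ (-s))) 1 := by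
  have hsummable : Summable fun n : ℕ => 2 * α * ((n : ℝ) + 1) ^ (-(3 / 2) : ℝ) := by
    refine .mul_left _ ?_
    exact_mod_cast (summable_nat_add_iff 1).mpr (Real.summable_nat_rpow.mpr (by norm_num))
  refine (continuousOn_tsum (fun n => ?_) hsummable fun n s hs => ?_).continuousAt
    (Metric.ball_mem_nhds 1 one_half_pos)
  · have hpos : ∀ c : ℝ, 0 < c → Continuous fun s : ℂ => (c : ℂ) ^ (-s) := fun c hc =>
      continuous_neg.const_cpow (.inl (ofReal_ne_zero.mpr hc.ne'))
    exact ((hpos _ (by positivity)).sub (hpos _ (by positivity))).continuousOn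
  · have hs1 : ‖s - 1‖ < 1 / 2 := by simpa [dist_eq_norm] using hs
    have hre : 1 / 2 < s.re := by
      have := (abs_lt.mp ((abs_re_le_norm (s - 1)).trans_lt hs1)).1
      simp only [sub_re, one_re] at this
      linarith
    have hnorm : ‖s‖ ≤ 2 := by linarith [norm_le_norm_sub_add s 1, norm_one (α := ℂ)]
    refine (norm_ofReal_cpow_neg_sub_le (a := (n : ℝ) + 1) (by linarith) (by positivity)
      (le_add_of_nonneg_right hα)).trans ?_
    rw [add_sub_cancel_left, mul_right_comm]
    gcongr
    · exact le_add_of_nonneg_left n.cast_nonneg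
    · linarith

lemma riemannZeta_sub_hurwitzZeta_eq_tsum {α : ℝ} (hα : 0 < α) (hα1 : α ≤ 1) {s : ℂ}
    (hs : 1 < s.re) :
    riemannZeta s - hurwitzZeta α s = ∑' n : ℕ,
      ((((n : ℝ) + 1 : ℝ) : ℂ) ^ (-s) - (((n : ℝ) + 1 + α : ℝ) : ℂ) ^ (-s)) - (α : ℂ) ^ (-s) := by
  have hζ : HasSum (fun n : ℕ => 1 / ((n : ℂ) + (1 : ℝ)) ^ s) (riemannZeta s) := by
    have h := hasSum_hurwitzZeta_of_one_lt_re (a := 1) ⟨zero_le_one, le_rfl⟩ hs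
    rwa [AddCircle.coe_period, hurwitzZeta_zero] at h
  have hζα := (hasSum_nat_add_iff' 1).mpr (hasSum_hurwitzZeta_of_one_lt_re ⟨hα.le, hα1⟩ hs)
  have hsum : HasSum (fun n : ℕ =>
      (((n : ℝ) + 1 : ℝ) : ℂ) ^ (-s) - (((n : ℝ) + 1 + α : ℝ) : ℂ) ^ (-s))
      (riemannZeta s - hurwitzZeta α s + (α : ℂ) ^ (-s)) := by
    have hterm : (fun n : ℕ => (((n : ℝ) + 1 : ℝ) : ℂ) ^ (-s) - (((n : ℝ) + 1 + α : ℝ) : ℂ) ^ (-s))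
        = fun n : ℕ => 1 / ((n : ℂ) + (1 : ℝ)) ^ s - 1 / (((n + 1 : ℕ) : ℂ) + α) ^ s := by
      ext n
      push_cast
      simp only [cpow_neg, one_div]
    rw [hterm, show riemannZeta s - hurwitzZeta α s + (α : ℂ) ^ (-s) =
      riemannZeta s - (hurwitzZeta α s - ∑ i ∈ Finset.range 1, 1 / ((i : ℂ) + α) ^ s) by
        simp only [cpow_neg, Finset.range_one, one_div, Finset.sum_singleton, CharP.cast_eq_zero,
          zero_add]
        ring]
    exact hζ.sub hζα
  rw [hsum.tsum_eq]
  ring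

lemma riemannZeta_sub_hurwitzZeta_one {α : ℝ} (hα : 0 < α) (hα1 : α ≤ 1) :
    riemannZeta 1 - hurwitzZeta α 1 =
      ((-α⁻¹ + ∑' n : ℕ, (((n : ℝ) + 1)⁻¹ - ((n : ℝ) + 1 + α)⁻¹) : ℝ) : ℂ) := by
  have hD : Continuous fun s => riemannZeta s - hurwitzZeta α s := by
    simpa [hurwitzZeta_zero] using (differentiable_hurwitzZeta_sub_hurwitzZeta 0 α).continuous
  have hG : ContinuousAt (fun s : ℂ => ∑' n : ℕ,
      ((((n : ℝ) + 1 : ℝ) : ℂ) ^ (-s) - (((n : ℝ) + 1 + α : ℝ) : ℂ) ^ (-s)) - (α : ℂ) ^ (-s)) 1 :=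
    (continuousAt_tsum_cpow_neg_sub hα.le).sub
      (continuous_neg.const_cpow (.inl (ofReal_ne_zero.mpr hα.ne'))).continuousAt
  have hright : Tendsto ((↑) : ℝ → ℂ) (𝓝[>] 1) (𝓝 1) := by
    simpa using continuous_ofReal.continuousWithinAt.tendsto (s := Set.Ioi 1) (x := 1)
  have hagree : ∀ᶠ σ : ℝ in 𝓝[>] 1, riemannZeta σ - hurwitzZeta α σ = ∑' n : ℕ,
      ((((n : ℝ) + 1 : ℝ) : ℂ) ^ (-(σ : ℂ)) - (((n : ℝ) + 1 + α : ℝ) : ℂ) ^ (-(σ : ℂ)))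
        - (α : ℂ) ^ (-(σ : ℂ)) := by
    filter_upwards [self_mem_nhdsWithin] with σ hσ
    exact riemannZeta_sub_hurwitzZeta_eq_tsum hα hα1 (by simpa using hσ)
  rw [tendsto_nhds_unique ((hD.tendsto 1).comp hright)
    (((hG.tendsto).comp hright).congr' (hagree.mono fun σ h => h.symm))]
  simp only [ofReal_add, ofReal_natCast, ofReal_one, cpow_neg_one, ofReal_neg, ofReal_inv,
    ofReal_tsum, ofReal_sub]
  ring

lemma hurwitzZetaSubPole_one_eq {α : ℝ} {g : ℂ → ℂ} (hg : ContinuousAt g 1)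
    (hg_eq : ∀ s : ℂ, s ≠ 1 → g s = hurwitzZeta (α : UnitAddCircle) s - 1 / (s - 1)) :
    hurwitzZetaSubPole α 1 = g 1 := by
  have hlim : Tendsto (fun s : ℂ => hurwitzZeta (α : UnitAddCircle) s - 1 / (s - 1)) (𝓝[≠] 1)
      (𝓝 (g 1)) :=
    (hg.tendsto.mono_left nhdsWithin_le_nhds).congr' (eventually_nhdsWithin_of_forall hg_eq)
  rw [hurwitzZetaSubPole, Function.update_self, hlim.limUnder_eq]

theorem hurwitzZeta_sub_pole_value_at_one (α : ℝ) (hα : 0 < α) (hα1 : α ≤ 1) :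
    ∃ g : ℂ → ℂ, DifferentiableAt ℂ g 1 ∧
      (∀ s : ℂ, s ≠ 1 → g s = hurwitzZeta (α : UnitAddCircle) s - 1 / (s - 1)) ∧
      g 1 = -(deriv Real.Gamma α / Real.Gamma α : ℝ) ∧
      stieltjesGammaGen 0 α = -(deriv Real.Gamma α / Real.Gamma α) := by
  set g : ℂ → ℂ := fun s => hurwitzZeta α s - riemannZeta s + riemannZeta₀ s
  have hg : Differentiable ℂ g := by
    have hD := differentiable_hurwitzZeta_sub_hurwitzZeta α 0
    rw [hurwitzZeta_zero] at hD
    exact fun s => (hD s).add (differentiable_riemannZeta₀ s)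
  have hg_eq : ∀ s : ℂ, s ≠ 1 → g s = hurwitzZeta α s - 1 / (s - 1) := fun s hs => by
    simp only [g, riemannZeta_eq_inv_sub_add hs]
    ring
  have hg_one : g 1 = -(deriv Real.Gamma α / Real.Gamma α : ℝ) := by
    have h := riemannZeta_sub_hurwitzZeta_one hα hα1
    simp only [g, riemannZeta₀_one, Real.deriv_Gamma_div_Gamma hα]
    push_cast at h ⊢
    linear_combination -h
  refine ⟨g, hg 1, hg_eq, hg_one, ?_⟩
  rw [stieltjesGammaGen, iteratedDeriv_zero, hurwitzZetaSubPole_one_eq (hg 1).continuousAt hg_eq,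
    hg_one]
  simp
end
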